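/- Let A, B ∈ ℤ with 4A³ + 27B² ≠ 0 and Q(u,v) = u(v³ + Au²v + Bu³). There exists a constant depending only on A and B such that for every (u,v) ∈ ℤ² with Q(u,v) squarefree, the quantity η_{Q(u,v)}(A,B) satisfies η_{Q(u,v)}(A,B) ≪ max{|u|^{1/2}, |v|^{1/2}}, provided max{|u|, |v|} is larger than a constant depending at most on A and B; in particular the point (uv:1:u²) on E_{Q(u,v)} is non-torsion for such (u,v). -/

import Mathlib

open Filter

/-- The binary quartic form `Q(u,v) = u(v³ + Au²v + Bu³)`. -/
def QF (A B u v : ℤ) : ℤ := u * (v ^ 3 + A * u ^ 2 * v + B * u ^ 3)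

/-- An integral Weierstrass model of the quadratic twist `E_d : dy² = x³ + Ax + B`,
namely `Y² = X³ + Ad²X + Bd³`, obtained via `(x, y) ↦ (dx, d²y)`. -/
def Ed (A B d : ℤ) : WeierstrassCurve.Affine ℚ :=
  { a₁ := 0, a₂ := 0, a₃ := 0, a₄ := (A : ℚ) * d ^ 2, a₆ := (B : ℚ) * d ^ 3 }

/-- The Weil height of a rational number `x = a/b` in lowest terms: `log max {|a|, |b|}`. -/
noncomputable def hxQ (x : ℚ) : ℝ := Real.log (max |(x.num : ℝ)| (x.den : ℝ))

/-- The Weil height `h_x` of a rational point on a Weierstrass curve: the height of the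
image of the point under `x : E → ℙ¹` (and `0` at the point at infinity). -/
noncomputable def hxPoint {W : WeierstrassCurve.Affine ℚ} : W.Point → ℝ
  | .zero => 0
  | .some x _ _ => hxQ x

/-- The canonical height `ĥ(P) = (1/2)·lim_{n → ∞} 4⁻ⁿ h_x(2ⁿ P)`. -/
noncomputable def canHeight {W : WeierstrassCurve.Affine ℚ} (P : W.Point) : ℝ :=
  (limUnder atTop fun n : ℕ => hxPoint ((2 ^ n : ℕ) • P) / 4 ^ n) / 2

/-- The set `𝓗(Y)` of squarefree `d` with `η_d(A,B) ≤ Y`, i.e. such that `E_d` has a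
non-torsion rational point of canonical height at most `log Y`. -/
noncomputable def HSet (A B : ℤ) (Y : ℝ) : Set ℤ :=
  {d | Squarefree d ∧
    ∃ P : (Ed A B d).Point, ¬ IsOfFinAddOrder P ∧ canHeight P ≤ Real.log Y}

/-- The Mordell–Weil rank of `E_d(ℚ)`. -/
noncomputable def mwRank (A B d : ℤ) : ℕ := Module.finrank ℤ (Ed A B d).Point

/-- `r_Q(d; Z) = #{(u,v) ∈ ℤ² : |u|, |v| ≤ Z, Q(u,v) = d}`. -/
noncomputable def rQ (A B d : ℤ) (Z : ℝ) : ℕ :=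
  Nat.card {p : ℤ × ℤ // (|p.1| : ℝ) ≤ Z ∧ (|p.2| : ℝ) ≤ Z ∧ QF A B p.1 p.2 = d}

/-!
Put `d = Q(u,v)` and `ξ = v/u`, so that `P = (dξ, d²/u²)` on `Y² = X³ + Ad²X + Bd³`. Doubling
acts on `X/d` by the duplication map `x ↦ x(2R)` of `y² = x³ + Ax + B`, a morphism `ℙ¹ → ℙ¹` of
degree 4 (its two components generate a power of each coordinate up to the factor
`4(4A³ + 27B²)`), so it multiplies heights by 4 up to a bounded error `L`. Squarefreeness of
`Q(u,v)` forces `gcd(u,v) = 1`, hence `h(ξ) = log max(|u|,|v|)`. Once this exceeds `L/3` and the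
heights of the roots of `x³ + Ax + B`, the heights of the iterates of `ξ` increase strictly, so
no iterate is a root (doubling never reaches `O`) and `P` is non-torsion. Tate's telescoping gives
`lim 4⁻ⁿ h(x(2ⁿP)) ≤ h(ξ) + L/3`; the twist by `d` moves each `h(x(2ⁿP))` by at most `h(d)`,
which disappears in the limit.
-/

open Height Polynomial Topology

namespace Height

variable {K : Type*} [Field K] [AdmissibleAbsValues K]

theorem exists_abs_logHeight₁_div_eval_sub_le {m n : ℕ} {f g : K[X]}
    (hf : f.natDegree ≤ n) (hg : g.natDegree ≤ n) {a b c e : K[X]} (ha : a.natDegree ≤ m)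
    (hb : b.natDegree ≤ m) (hc : c.natDegree ≤ m) (he : e.natDegree ≤ m) {r : K} (hr : r ≠ 0)
    (hab : a * f + b * g = C r * X ^ (m + n)) (hce : c * f + e * g = C r) :
    ∃ C, ∀ x : K, |logHeight₁ (f.eval x / g.eval x) - n * logHeight₁ x| ≤ C := by
  let p : Fin 2 → MvPolynomial (Fin 2) K := ![f.homogenize n, g.homogenize n]
  let q : Fin 2 × Fin 2 → MvPolynomial (Fin 2) K :=
    fun ij ↦ MvPolynomial.C r⁻¹ * (![![a, b], ![c, e]] ij.1 ij.2).homogenize m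
  obtain ⟨C₁, hC₁⟩ := logHeight_eval_le' (p := p) fun i ↦ by
    fin_cases i <;> exact isHomogeneous_homogenize _
  obtain ⟨C₂, hC₂⟩ := logHeight_eval_ge' (N := n) (q := q) fun _ ↦
    (isHomogeneous_homogenize _).C_mul _
  refine ⟨max C₁ (-C₂), fun x ↦ ?_⟩
  have hp : (fun j ↦ (p j).eval ![x, 1]) = ![f.eval x, g.eval x] := by
    ext j; fin_cases j <;> simp [p, eval_homogenize, *]
  have hq : ∀ k, ∑ j, (q (k, j)).eval ![x, 1] * (p j).eval ![x, 1] = ![x, 1] k ^ (m + n) := by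
    have hab' := congrArg (eval x) hab
    have hce' := congrArg (eval x) hce
    simp only [eval_add, eval_mul, eval_C, eval_pow, eval_X] at hab' hce'
    intro k
    fin_cases k <;> simp [p, q, Fin.sum_univ_two, eval_homogenize, *] <;> field_simp
    · linear_combination hab'
    · linear_combination hce'
  have hup := hC₁ ![x, 1]
  have hlow := hC₂ p hq
  rw [hp, ← logHeight₁_eq_logHeight, ← logHeight₁_div_eq_logHeight] at hup hlow
  rw [abs_le]
  constructor <;> linarith [le_max_left C₁ (-C₂), le_max_right C₁ (-C₂)]

lemma exists_logHeight₁_le_of_isRoot {p : K[X]} (hp : p ≠ 0) :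
    ∃ c, ∀ x, p.IsRoot x → logHeight₁ x ≤ c := by
  obtain ⟨c, hc⟩ := ((finite_setOfPred_isRoot hp).image logHeight₁).bddAbove
  exact ⟨c, fun x hx ↦ hc ⟨x, hx, rfl⟩⟩

lemma abs_logHeight₁_mul_sub_le {d : K} (hd : d ≠ 0) (x : K) :
    |logHeight₁ (d * x) - logHeight₁ x| ≤ logHeight₁ d := by
  have h := logHeight₁_mul_le d⁻¹ (d * x)
  rw [inv_mul_cancel_left₀ hd, logHeight₁_inv] at h
  rw [abs_le]
  constructor <;> linarith [logHeight₁_mul_le d x]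

end Height

/-- The `x`-coordinate of `2R` in terms of that of `R` on `y² = x³ + Ax + B`. -/
def xDouble {K : Type*} [Field K] (A B x : K) : K :=
  (x ^ 4 - 2 * A * x ^ 2 - 8 * B * x + A ^ 2) / (4 * (x ^ 3 + A * x + B))

theorem exists_abs_logHeight₁_xDouble_sub_le {K : Type*} [Field K] [AdmissibleAbsValues K]
    [CharZero K] {A B : K} (hAB : 4 * A ^ 3 + 27 * B ^ 2 ≠ 0) :
    ∃ C, ∀ x : K, |logHeight₁ (xDouble A B x) - 4 * logHeight₁ x| ≤ C := by
  have h := exists_abs_logHeight₁_div_eval_sub_le (m := 3) (n := 4)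
    (f := X ^ 4 - 2 * C A * X ^ 2 - 8 * C B * X + C A ^ 2) (g := 4 * (X ^ 3 + C A * X + C B))
    (a := 4 * C (4 * A ^ 3 + 27 * B ^ 2) * X ^ 3 - 4 * C (A ^ 2 * B) * X ^ 2
      + C (12 * A ^ 4 + 88 * A * B ^ 2) * X + C (12 * A ^ 3 * B + 96 * B ^ 3))
    (b := C (A ^ 2 * B) * X ^ 3 + C (5 * A ^ 4 + 32 * A * B ^ 2) * X ^ 2
      + C (26 * A ^ 3 * B + 192 * B ^ 3) * X - C (3 * A ^ 5 + 24 * A ^ 2 * B ^ 2))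
    (c := 12 * X ^ 2 + 16 * C A) (e := -(3 * X ^ 3 - 5 * C A * X - 27 * C B))
    (by compute_degree!) (by compute_degree!) (by compute_degree!) (by compute_degree!)
    (by compute_degree!) (by compute_degree!) (r := 4 * (4 * A ^ 3 + 27 * B ^ 2))
    (mul_ne_zero (by norm_num) hAB)
    (by simp only [map_add, map_mul, map_pow, map_ofNat]; ring)
    (by simp only [map_add, map_mul, map_pow, map_ofNat]; ring)
  simpa [xDouble] using h

lemma hxQ_eq_logHeight₁ (x : ℚ) : hxQ x = logHeight₁ x := by
  simp [hxQ, Rat.logHeight₁_eq_log_max, Nat.cast_natAbs]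

lemma Rat.logHeight₁_intCast_div_intCast {u v : ℤ} (h : IsCoprime u v) :
    logHeight₁ ((v : ℚ) / u) = Real.log (max |(u : ℝ)| |(v : ℝ)|) := by
  have hgcd : Finset.univ.gcd ![v, u] = 1 := by
    simp only [Finset.univ_fin2]
    simpa [← Int.abs_eq_normalize, ← Int.coe_gcd, Int.gcd, Int.natAbs_abs] using
      Int.isCoprime_iff_gcd_eq_one.mp h.symm
  have hmax : (⨆ i, |![v, u] i|) = max |v| |u| :=
    le_antisymm (ciSup_le fun i ↦ by fin_cases i <;> simp)
      (max_le (Finite.le_ciSup_of_le 0 le_rfl) (Finite.le_ciSup_of_le 1 le_rfl))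
  have := Rat.logHeight_eq_max_abs_of_gcd_eq_one hgcd
  rw [hmax] at this
  rw [logHeight₁_div_eq_logHeight, max_comm]
  convert this using 2
  · ext i; fin_cases i <;> simp
  · push_cast; rfl

section QuasiGeometric

variable {r L : ℝ} {h : ℕ → ℝ}

lemma strictMono_of_abs_sub_mul_le (hr : 1 < r) (hL : ∀ n, |h (n + 1) - r * h n| ≤ L)
    (h₀ : L < (r - 1) * h 0) : StrictMono h := by
  have step : ∀ n, h 0 ≤ h n → h n < h (n + 1) := fun n hn ↦ by
    nlinarith [(abs_le.mp (hL n)).1]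
  have ge : ∀ n, h 0 ≤ h n := fun n ↦ by
    induction n with
    | zero => exact le_rfl
    | succ n ih => exact ih.trans (step n ih).le
  exact strictMono_nat_of_lt_succ fun n ↦ step n (ge n)

lemma exists_tendsto_div_pow_of_abs_sub_mul_le (hr : 1 < r)
    (hL : ∀ n, |h (n + 1) - r * h n| ≤ L) :
    ∃ l, Tendsto (fun n ↦ h n / r ^ n) atTop (𝓝 l) ∧ |h 0 - l| ≤ L / (r - 1) := by
  have hr₀ : 0 < r := by linarith
  have hr' : r⁻¹ < 1 := inv_lt_one_of_one_lt₀ hr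
  have hdist : ∀ n, dist (h n / r ^ n) (h (n + 1) / r ^ (n + 1)) ≤ L / r * r⁻¹ ^ n := by
    intro n
    have hrn : 0 < r ^ (n + 1) := pow_pos hr₀ _
    have hdiff : h (n + 1) / r ^ (n + 1) - h n / r ^ n = (h (n + 1) - r * h n) / r ^ (n + 1) := by
      rw [pow_succ]
      field_simp
    calc dist (h n / r ^ n) (h (n + 1) / r ^ (n + 1))
        = |h (n + 1) - r * h n| / r ^ (n + 1) := by
          rw [Real.dist_eq, abs_sub_comm, hdiff, abs_div, abs_of_pos hrn]
      _ ≤ L / r ^ (n + 1) := by gcongr; exact hL n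
      _ = L / r * r⁻¹ ^ n := by rw [inv_pow, pow_succ]; field_simp
  obtain ⟨l, hl⟩ := cauchySeq_tendsto_of_complete (cauchySeq_of_le_geometric _ _ hr' hdist)
  refine ⟨l, hl, ?_⟩
  have := dist_le_of_le_geometric_of_tendsto₀ _ _ hr' hdist hl
  rw [Real.dist_eq, pow_zero, div_one] at this
  convert this using 1
  field_simp

lemma Filter.Tendsto.div_pow_of_abs_sub_le {g : ℕ → ℝ} {D l : ℝ} (hr : 1 < r)
    (hgh : ∀ n, |g n - h n| ≤ D) (hh : Tendsto (fun n ↦ h n / r ^ n) atTop (𝓝 l)) :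
    Tendsto (fun n ↦ g n / r ^ n) atTop (𝓝 l) := by
  have hr₀ : 0 < r := by linarith
  have hgeom := (tendsto_pow_atTop_nhds_zero_of_lt_one (by positivity)
    (inv_lt_one_of_one_lt₀ hr)).const_mul D
  rw [mul_zero] at hgeom
  have hsmall : Tendsto (fun n ↦ (g n - h n) / r ^ n) atTop (𝓝 0) := by
    refine squeeze_zero_norm (fun n ↦ ?_) hgeom
    rw [Real.norm_eq_abs, abs_div, abs_of_pos (pow_pos hr₀ n), inv_pow, ← div_eq_mul_inv]
    gcongr
    exact hgh n
  simpa only [add_zero, ← add_div, add_sub_cancel] using hh.add hsmall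

end QuasiGeometric

lemma not_isOfFinAddOrder_of_injective_nsmul_comp {G : Type*} [AddMonoid G] {P : G} {f : ℕ → ℕ}
    (hf : Function.Injective fun n ↦ f n • P) : ¬IsOfFinAddOrder P := fun hP ↦
  Set.infinite_range_of_injective hf <|
    hP.finite_multiples.subset <| Set.range_subset_iff.2 fun n ↦ ⟨f n, rfl⟩

lemma isCoprime_of_squarefree_QF {A B u v : ℤ} (h : Squarefree (QF A B u v)) : IsCoprime u v :=
  isRelPrime_iff_isCoprime.mp fun g ⟨a, hu⟩ ⟨b, hv⟩ ↦
    h g ⟨g ^ 2 * a * (b ^ 3 + A * a ^ 2 * b + B * a ^ 3), by subst hu hv; unfold QF; ring⟩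

section Twist

open WeierstrassCurve.Affine

variable {A B d : ℤ}

lemma Ed_equation_iff {X Y : ℚ} :
    (Ed A B d).Equation X Y ↔ Y ^ 2 = X ^ 3 + A * d ^ 2 * X + B * d ^ 3 := by
  simp [equation_iff, Ed]

lemma Ed_two_nsmul_some (hd : d ≠ 0) {ξ Y : ℚ} (hξ : ξ ^ 3 + A * ξ + B ≠ 0)
    (h : (Ed A B d).Nonsingular (d * ξ) Y) :
    ∃ Y', ∃ h' : (Ed A B d).Nonsingular (d * xDouble (A : ℚ) B ξ) Y',
      2 • Point.some _ _ h = Point.some _ _ h' := by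
  have hY : Y ^ 2 = d ^ 3 * (ξ ^ 3 + A * ξ + B) := by
    linear_combination Ed_equation_iff.mp h.1
  have hY₀ : Y ≠ 0 := by
    rintro rfl
    exact mul_ne_zero (pow_ne_zero 3 (Int.cast_ne_zero.mpr hd)) hξ (by linear_combination -hY)
  have hYneg : Y ≠ (Ed A B d).negY (d * ξ) Y := by
    simpa [Ed, negY, eq_neg_iff_add_eq_zero, ← two_mul] using hY₀
  have hx : (Ed A B d).addX (d * ξ) (d * ξ) ((Ed A B d).slope (d * ξ) (d * ξ) Y Y)
      = d * xDouble (A : ℚ) B ξ := by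
    rw [slope_of_Y_ne rfl hYneg]
    simp only [Ed, addX, negY, xDouble, zero_mul, mul_zero, sub_zero, add_zero, sub_neg_eq_add]
    generalize hg : ξ ^ 3 + A * ξ + B = g at hξ hY
    have hd' : (d : ℚ) ≠ 0 := Int.cast_ne_zero.mpr hd
    field_simp
    linear_combination (-32 * ξ * g - 4 * (ξ ^ 4 - 2 * A * ξ ^ 2 - 8 * B * ξ + A ^ 2)) * hY
      + 32 * d ^ 3 * g * ξ * hg
  refine ⟨_, hx ▸ nonsingular_add h h fun h' ↦ hYneg h'.2, ?_⟩
  rw [two_nsmul, Point.add_self_of_Y_ne hYneg]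
  congr

lemma Ed_two_pow_nsmul_some (hd : d ≠ 0) {ξ X Y : ℚ} (hX : X = d * ξ)
    (hξ : ∀ n, (xDouble (A : ℚ) B)^[n] ξ ^ 3 + A * (xDouble (A : ℚ) B)^[n] ξ + B ≠ 0)
    (h : (Ed A B d).Nonsingular X Y) (n : ℕ) :
    ∃ Y', ∃ h' : (Ed A B d).Nonsingular (d * (xDouble (A : ℚ) B)^[n] ξ) Y',
      (2 ^ n : ℕ) • Point.some _ _ h = Point.some _ _ h' := by
  subst hX
  induction n with
  | zero => exact ⟨Y, h, one_nsmul _⟩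
  | succ n ih =>
    obtain ⟨Y', h', hn⟩ := ih
    obtain ⟨Y'', h'', h2⟩ := Ed_two_nsmul_some hd (hξ n) h'
    rw [Function.iterate_succ_apply']
    exact ⟨Y'', h'', by rw [pow_succ, mul_nsmul, hn, h2]⟩

theorem Ed_some_not_isOfFinAddOrder_and_canHeight_le {L c₀ : ℝ} (hd : d ≠ 0)
    (hL : ∀ x : ℚ, |logHeight₁ (xDouble (A : ℚ) B x) - 4 * logHeight₁ x| ≤ L)
    (hc₀ : ∀ x : ℚ, x ^ 3 + A * x + B = 0 → logHeight₁ x ≤ c₀) {ξ X Y : ℚ}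
    (hξ : max c₀ (L / 3) < logHeight₁ ξ) (hX : X = d * ξ) (h : (Ed A B d).Nonsingular X Y) :
    ¬IsOfFinAddOrder (Point.some _ _ h) ∧
      canHeight (Point.some _ _ h) ≤ (logHeight₁ ξ + L / 3) / 2 := by
  set x : ℕ → ℚ := fun n ↦ (xDouble (A : ℚ) B)^[n] ξ with hx
  have hstep : ∀ n, |logHeight₁ (x (n + 1)) - 4 * logHeight₁ (x n)| ≤ L := fun n ↦ by
    simpa only [hx, Function.iterate_succ_apply'] using hL (x n)
  have hx₀ : x 0 = ξ := rfl
  have hmono : StrictMono fun n ↦ logHeight₁ (x n) :=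
    strictMono_of_abs_sub_mul_le (r := 4) (by norm_num) hstep
      (by rw [hx₀]; linarith [le_max_right c₀ (L / 3)])
  have hroot : ∀ n, x n ^ 3 + A * x n + B ≠ 0 := fun n hn ↦ by
    have : logHeight₁ ξ ≤ logHeight₁ (x n) := hmono.monotone (Nat.zero_le n)
    linarith [hc₀ _ hn, le_max_left c₀ (L / 3)]
  have horbit := Ed_two_pow_nsmul_some hd hX hroot h
  have hd' : (d : ℚ) ≠ 0 := Int.cast_ne_zero.mpr hd
  refine ⟨not_isOfFinAddOrder_of_injective_nsmul_comp (f := (2 ^ ·)) fun a b hab ↦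
    hmono.injective ?_, ?_⟩
  · obtain ⟨_, _, ha⟩ := horbit a
    obtain ⟨_, _, hb⟩ := horbit b
    simp only [ha, hb, Point.some.injEq, mul_right_inj' hd'] at hab
    exact congrArg logHeight₁ hab.1
  obtain ⟨l, hl, hl₀⟩ := exists_tendsto_div_pow_of_abs_sub_mul_le (r := 4)
    (h := fun n ↦ logHeight₁ (x n)) (by norm_num) hstep
  have hlim : Tendsto (fun n : ℕ ↦ hxPoint ((2 ^ n : ℕ) • Point.some _ _ h) / 4 ^ n) atTop
      (𝓝 l) := hl.div_pow_of_abs_sub_le (r := 4) (by norm_num) fun n ↦ by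
    obtain ⟨_, _, hn⟩ := horbit n
    rw [hn, hxPoint, hxQ_eq_logHeight₁]
    exact abs_logHeight₁_mul_sub_le hd' _
  rw [canHeight, hlim.limUnder_eq, ← hx₀]
  linarith [(abs_le.mp hl₀).1]

end Twist

/-- There are constants `c, C > 0` depending only on `A` and `B` such that for every
`(u,v) ∈ ℤ²` with `Q(u,v)` squarefree and `max {|u|, |v|} > c`, the rational point
`(uv : 1 : u²)` on `E_{Q(u,v)} : dy² = x³ + Ax + B` (which, in the integral model
`Y² = X³ + Ad²X + Bd³` of `E_d` with `d = Q(u,v)`, has coordinates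
`(X, Y) = (dv/u, d²/u²)`) is non-torsion, and its canonical height is at most
`log (C·max {|u|, |v|}^{1/2})`; in particular `η_{Q(u,v)}(A,B) ≤ C·max {|u|^{1/2}, |v|^{1/2}}`. -/
theorem eta_of_twist_le (A B : ℤ) (hAB : 4 * A ^ 3 + 27 * B ^ 2 ≠ 0) :
    ∃ c C : ℝ, 0 < c ∧ 0 < C ∧
      ∀ u v : ℤ, Squarefree (QF A B u v) → c < max (|u| : ℝ) (|v| : ℝ) →
        ∀ h : (Ed A B (QF A B u v)).Nonsingular
            ((QF A B u v : ℚ) * v / u) ((QF A B u v : ℚ) ^ 2 / u ^ 2),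
          ¬ IsOfFinAddOrder (WeierstrassCurve.Affine.Point.some _ _ h) ∧
          canHeight (WeierstrassCurve.Affine.Point.some _ _ h) ≤
            Real.log (C * Real.sqrt (max (|u| : ℝ) (|v| : ℝ))) := by
  obtain ⟨L, hL⟩ := exists_abs_logHeight₁_xDouble_sub_le (K := ℚ) (A := A) (B := B)
    (by exact_mod_cast hAB)
  obtain ⟨c₀, hc₀⟩ := exists_logHeight₁_le_of_isRoot
    (Monic.ne_zero (p := X ^ 3 + C (A : ℚ) * X + C (B : ℚ)) (by monicity!))
  refine ⟨Real.exp (max c₀ (L / 3)), Real.exp (L / 6), Real.exp_pos _, Real.exp_pos _,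
    fun u v hsf hM h ↦ ?_⟩
  have hM₀ := (Real.exp_pos _).trans hM
  have hξ : logHeight₁ ((v : ℚ) / u) = Real.log (max (|u| : ℝ) (|v| : ℝ)) :=
    Rat.logHeight₁_intCast_div_intCast (isCoprime_of_squarefree_QF hsf)
  obtain ⟨hfin, hcan⟩ := Ed_some_not_isOfFinAddOrder_and_canHeight_le hsf.ne_zero hL
    (fun x hx ↦ hc₀ x (by simpa using hx)) (by rwa [hξ, Real.lt_log_iff_exp_lt hM₀])
    (mul_div_assoc _ _ _) h
  refine ⟨hfin, hcan.trans_eq ?_⟩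
  rw [hξ, Real.log_mul (Real.exp_pos _).ne' (Real.sqrt_pos.2 hM₀).ne', Real.log_exp,
    Real.log_sqrt hM₀.le]
  ring
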